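/- Let $P, Q \in \mathbb{R}^{n\times n}$ be symmetric positive definite with factorizations $P = KK^T$ and $Q = LL^T$, and let $K^T L = V\Sigma U^T$ be a singular value decomposition with $\Sigma$ invertible diagonal. Define $T = \Sigma^{-1/2} U^T L^T$ and $S = KV\Sigma^{-1/2}$. Then $TS = I$ (so $S = T^{-1}$), and $TPT^T = \Sigma = T^{-T}QT^{-1}$, i.e., the transformation $T$ simultaneously diagonalizes and equalizes the two Gramians. -/

import Mathlib

open Matrix

/-! With `LᵀK = UΣVᵀ` (the transposed SVD) and `UᵀU = VᵀV = 1`, the products `TS`, `TPTᵀ`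
and `SᵀQS` collapse to `Σ^{-1/2} Σ Σ^{-1/2} = 1` and `Σ^{-1/2} Σ² Σ^{-1/2} = Σ`. -/

namespace Matrix

section Balancing

variable {m k R : Type*} [Fintype m] [Fintype k] [CommRing R]
  {K L : Matrix m k R} {U V D E : Matrix k k R}

theorem transpose_mul_eq_of_svd (hSVD : Kᵀ * L = V * D * Uᵀ) (hD : Dᵀ = D) :
    Lᵀ * K = U * D * Vᵀ := by
  simpa [Matrix.transpose_mul, hD, Matrix.mul_assoc] using congrArg transpose hSVD

variable [DecidableEq k]

theorem svd_balancing_mul (hSVD : Kᵀ * L = V * D * Uᵀ) (hD : Dᵀ = D)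
    (hU : Uᵀ * U = 1) (hV : Vᵀ * V = 1) :
    E * Uᵀ * Lᵀ * (K * V * E) = E * D * E :=
  calc E * Uᵀ * Lᵀ * (K * V * E) = E * Uᵀ * (Lᵀ * K) * V * E := by
        simp only [Matrix.mul_assoc]
    _ = E * (Uᵀ * U) * D * (Vᵀ * V) * E := by
        rw [transpose_mul_eq_of_svd hSVD hD]; simp only [Matrix.mul_assoc]
    _ = E * D * E := by rw [hU, hV, Matrix.mul_one, Matrix.mul_one]

theorem svd_balancing_conj_left (hSVD : Kᵀ * L = V * D * Uᵀ) (hD : Dᵀ = D) (hE : Eᵀ = E)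
    (hU : Uᵀ * U = 1) (hV : Vᵀ * V = 1) :
    E * Uᵀ * Lᵀ * (K * Kᵀ) * (E * Uᵀ * Lᵀ)ᵀ = E * D * D * E :=
  calc E * Uᵀ * Lᵀ * (K * Kᵀ) * (E * Uᵀ * Lᵀ)ᵀ = E * Uᵀ * (Lᵀ * K) * (Kᵀ * L) * U * E := by
        simp only [Matrix.transpose_mul, Matrix.transpose_transpose, hE, Matrix.mul_assoc]
    _ = E * (Uᵀ * U) * D * (Vᵀ * V) * D * (Uᵀ * U) * E := by
        rw [transpose_mul_eq_of_svd hSVD hD, hSVD]; simp only [Matrix.mul_assoc]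
    _ = E * D * D * E := by rw [hU, hV, Matrix.mul_one, Matrix.mul_one, Matrix.mul_one]

theorem svd_balancing_conj_right (hSVD : Kᵀ * L = V * D * Uᵀ) (hD : Dᵀ = D) (hE : Eᵀ = E)
    (hU : Uᵀ * U = 1) (hV : Vᵀ * V = 1) :
    (K * V * E)ᵀ * (L * Lᵀ) * (K * V * E) = E * D * D * E :=
  calc (K * V * E)ᵀ * (L * Lᵀ) * (K * V * E) = E * Vᵀ * (Kᵀ * L) * (Lᵀ * K) * V * E := by
        simp only [Matrix.transpose_mul, hE, Matrix.mul_assoc]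
    _ = E * (Vᵀ * V) * D * (Uᵀ * U) * D * (Vᵀ * V) * E := by
        rw [transpose_mul_eq_of_svd hSVD hD, hSVD]; simp only [Matrix.mul_assoc]
    _ = E * D * D * E := by rw [hU, hV, Matrix.mul_one, Matrix.mul_one, Matrix.mul_one]

end Balancing

section InvSqrt

variable {ι : Type*} [Fintype ι] [DecidableEq ι] {σ : ι → ℝ}

theorem diagonal_inv_sqrt_conj (hσ : ∀ i, 0 < σ i) :
    diagonal (fun i => (√(σ i))⁻¹) * diagonal σ * diagonal (fun i => (√(σ i))⁻¹) = 1 := by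
  simp only [diagonal_mul_diagonal, ← diagonal_one]
  congr 1; funext i
  have hsqrt_pos := Real.sqrt_pos.2 (hσ i)
  field_simp
  exact (Real.sq_sqrt (hσ i).le).symm

theorem diagonal_inv_sqrt_conj_sq (hσ : ∀ i, 0 < σ i) :
    diagonal (fun i => (√(σ i))⁻¹) * diagonal σ * diagonal σ *
      diagonal (fun i => (√(σ i))⁻¹) = diagonal σ := by
  simp only [diagonal_mul_diagonal]
  congr 1; funext i
  have hsqrt_pos := Real.sqrt_pos.2 (hσ i)
  field_simp
  rw [Real.sq_sqrt (hσ i).le, sq]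

end InvSqrt

end Matrix

theorem balancing_transformation_exists_general {n : ℕ}
    (P Q K L : Matrix (Fin n) (Fin n) ℝ)
    (hK : P = K * Kᵀ) (hL : Q = L * Lᵀ)
    (V U : Matrix (Fin n) (Fin n) ℝ)
    (hV' : Vᵀ * V = 1) (hU' : Uᵀ * U = 1)
    (σ : Fin n → ℝ) (hσ : ∀ i, 0 < σ i)
    (hSVD : Kᵀ * L = V * Matrix.diagonal σ * Uᵀ) :
    (Matrix.diagonal (fun i => (Real.sqrt (σ i))⁻¹) * Uᵀ * Lᵀ) *
        (K * V * Matrix.diagonal (fun i => (Real.sqrt (σ i))⁻¹)) = 1 ∧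
      (Matrix.diagonal (fun i => (Real.sqrt (σ i))⁻¹) * Uᵀ * Lᵀ) * P *
          (Matrix.diagonal (fun i => (Real.sqrt (σ i))⁻¹) * Uᵀ * Lᵀ)ᵀ = Matrix.diagonal σ ∧
      (K * V * Matrix.diagonal (fun i => (Real.sqrt (σ i))⁻¹))ᵀ * Q *
          (K * V * Matrix.diagonal (fun i => (Real.sqrt (σ i))⁻¹)) = Matrix.diagonal σ := by
  subst hK hL
  have hD := diagonal_transpose σ
  have hE := diagonal_transpose fun i => (√(σ i))⁻¹
  refine ⟨?_, ?_, ?_⟩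
  · rw [svd_balancing_mul hSVD hD hU' hV', diagonal_inv_sqrt_conj hσ]
  · rw [svd_balancing_conj_left hSVD hD hE hU' hV', diagonal_inv_sqrt_conj_sq hσ]
  · rw [svd_balancing_conj_right hSVD hD hE hU' hV', diagonal_inv_sqrt_conj_sq hσ]

/-- Existence of a balancing transformation: if `P = KKᵀ`, `Q = LLᵀ`,
`KᵀL = VΣUᵀ` is an SVD with `Σ = diag σ`, `σᵢ > 0`, and
`T = Σ^{-1/2} Uᵀ Lᵀ`, `S = K V Σ^{-1/2}`, then `TS = I`, `TPTᵀ = Σ` and `SᵀQS = Σ`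
(i.e. `T⁻ᵀ Q T⁻¹ = Σ`). -/
theorem balancing_transformation_exists {n : ℕ}
    (P Q K L : Matrix (Fin n) (Fin n) ℝ) (hP : P.PosDef) (hQ : Q.PosDef)
    (hK : P = K * Kᵀ) (hL : Q = L * Lᵀ)
    (V U : Matrix (Fin n) (Fin n) ℝ)
    (hV : V * Vᵀ = 1) (hV' : Vᵀ * V = 1) (hU : U * Uᵀ = 1) (hU' : Uᵀ * U = 1)
    (σ : Fin n → ℝ) (hσ : ∀ i, 0 < σ i)
    (hSVD : Kᵀ * L = V * Matrix.diagonal σ * Uᵀ) :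
    (Matrix.diagonal (fun i => (Real.sqrt (σ i))⁻¹) * Uᵀ * Lᵀ) *
        (K * V * Matrix.diagonal (fun i => (Real.sqrt (σ i))⁻¹)) = 1 ∧
      (Matrix.diagonal (fun i => (Real.sqrt (σ i))⁻¹) * Uᵀ * Lᵀ) * P *
          (Matrix.diagonal (fun i => (Real.sqrt (σ i))⁻¹) * Uᵀ * Lᵀ)ᵀ = Matrix.diagonal σ ∧
      (K * V * Matrix.diagonal (fun i => (Real.sqrt (σ i))⁻¹))ᵀ * Q *
          (K * V * Matrix.diagonal (fun i => (Real.sqrt (σ i))⁻¹)) = Matrix.diagonal σ :=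
  balancing_transformation_exists_general P Q K L hK hL V U hV' hU' σ hσ hSVD
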